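/- Let m ≥ 2 be an integer and λ = 1/m. Let u₀ : ℝ × ℝ² → ℝ² and ρ₀ : ℝ × ℝ² → ℝ be smooth and ℤ²-periodic in the space variable, with div_x u₀ = 0 and ∂_t ρ₀ + div_x(u₀ ρ₀) = 0 on [0,1] × ℝ². Assume: (i) ρ₀(1, x) = ρ₀(0, m x) for all x; (ii) ∫_{[0,1]²} ρ₀(0, x) dx = 0; (iii) ‖u₀(t,·)‖_{L²([0,1]²)} ≤ K for all t ∈ [0,1]; (iv) ∑_{k ∈ ℤ² \ {0}} (2π|k|)^{-2} |(ρ₀(t,·))^_k|² ≤ M² for all t ∈ [0,1], where (ρ₀(t,·))^_k = ∫_{[0,1]²} ρ₀(t,x) e^{-2πi k·x} dx. Set T_n = ∑_{i=0}^{n-1} λ^i and T_∞ = 1/(1-λ), and define, for t ∈ [T_n, T_{n+1}), u(t,x) = u₀((t - T_n)/λ^n, m^n x) and ρ(t,x) = ρ₀((t - T_n)/λ^n, m^n x). Then: (a) ρ is continuous on [0, T_∞) × ℝ² with ρ(0,·) = ρ₀(0,·); (b) for each n, on (T_n, T_{n+1}) × ℝ² the pair (u, ρ) is smooth, div_x u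 = 0, and ∂_t ρ + div_x(u ρ) = 0; (c) ‖u(t,·)‖_{L²([0,1]²)} ≤ K for all t ∈ [0, T_∞); (d) (∑_{k ∈ ℤ² \ {0}} (2π|k|)^{-2} |(ρ(t,·))^_k|²)^{1/2} ≤ M λ^n for T_n ≤ t < T_{n+1}, and in particular this quantity tends to 0 as t → T_∞: perfect mixing in finite time. -/

import Mathlib

open MeasureTheory Real

set_option linter.unusedSectionVars false
set_option maxHeartbeats 1000000

set_option linter.unusedSectionVars false
set_option maxHeartbeats 1000000

section helpers
variable {E : Type*} [NormedAddCommGroup E] [NormedSpace ℝ E] [CompleteSpace E]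

lemma int1_shift (h : ℝ → E) (per : Function.Periodic h 1) (a : ℝ) :
    ∫ x in (0:ℝ)..1, h (x + a) = ∫ x in (0:ℝ)..1, h x := by
  rw [intervalIntegral.integral_comp_add_right h a]
  have := per.intervalIntegral_add_eq a 0
  simpa [add_comm] using this

lemma int1_scale (h : ℝ → E) (hc : Continuous h) (per : Function.Periodic h 1)
    (N : ℕ) (hN : 0 < N) :
    ∫ x in (0:ℝ)..1, h ((N:ℝ) * x) = ∫ x in (0:ℝ)..1, h x := by
  have hN' : (N:ℝ) ≠ 0 := Nat.cast_ne_zero.mpr hN.ne'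
  rw [intervalIntegral.integral_comp_mul_left h hN']
  have := per.intervalIntegral_add_zsmul_eq (N:ℤ) 0
    (fun t₁ t₂ => hc.intervalIntegrable t₁ t₂)
  simp only [← Int.cast_smul_eq_zsmul ℝ, Int.cast_natCast, smul_eq_mul, mul_one,
    zero_add] at this
  rw [mul_zero, mul_one, this, smul_smul, inv_mul_cancel₀ hN', one_smul]


lemma vec_eta (x : Fin 2 → ℝ) : ![x 0, x 1] = x := by
  ext i; fin_cases i <;> rfl

lemma cont_pair : Continuous (fun p : ℝ × ℝ => (![p.1, p.2] : Fin 2 → ℝ)) := by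
  apply continuous_pi
  intro i; fin_cases i <;> simp <;> fun_prop

lemma fubini2 (F : (Fin 2 → ℝ) → E) (hF : Continuous F) :
    ∫ x in Set.Icc (0 : Fin 2 → ℝ) 1, F x
      = ∫ x in (0:ℝ)..1, ∫ y in (0:ℝ)..1, F ![x, y] := by
  have hMP : MeasurePreserving (MeasurableEquiv.finTwoArrow : (Fin 2 → ℝ) ≃ᵐ ℝ × ℝ)
      volume volume := volume_preserving_finTwoArrow ℝ
  have hpre : (MeasurableEquiv.finTwoArrow : (Fin 2 → ℝ) ≃ᵐ ℝ × ℝ) ⁻¹'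
      (Set.Icc ((0:ℝ),(0:ℝ)) (1,1)) = Set.Icc (0 : Fin 2 → ℝ) 1 := by
    ext x
    simp [MeasurableEquiv.finTwoArrow, Prod.le_def, Pi.le_def, Fin.forall_fin_two]
  have key := hMP.setIntegral_preimage_emb (MeasurableEquiv.measurableEmbedding _)
      (fun p : ℝ × ℝ => F ![p.1, p.2]) (Set.Icc ((0:ℝ),(0:ℝ)) (1,1))
  rw [hpre] at key
  have lhs_eq : ∫ x in Set.Icc (0 : Fin 2 → ℝ) 1, F x
      = ∫ p in Set.Icc ((0:ℝ),(0:ℝ)) (1,1), F ![p.1, p.2] := by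
    rw [← key]
    apply setIntegral_congr_fun (by measurability)
    intro x _
    simp [MeasurableEquiv.finTwoArrow, vec_eta]
  have rhs_eq : ∫ x in (0:ℝ)..1, ∫ y in (0:ℝ)..1, F ![x, y]
      = ∫ x in Set.Icc (0:ℝ) 1, ∫ y in Set.Icc (0:ℝ) 1, F ![x, y] := by
    rw [intervalIntegral.integral_of_le zero_le_one, ← integral_Icc_eq_integral_Ioc]
    apply setIntegral_congr_fun measurableSet_Icc
    intro x _
    show ∫ y in (0:ℝ)..1, F ![x, y] = ∫ y in Set.Icc (0:ℝ) 1, F ![x, y]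
    rw [intervalIntegral.integral_of_le zero_le_one, ← integral_Icc_eq_integral_Ioc]
  rw [lhs_eq, rhs_eq, Set.Icc_prod_eq, Measure.volume_eq_prod, setIntegral_prod]
  exact ((hF.comp cont_pair).continuousOn).integrableOn_compact
    (isCompact_Icc.prod isCompact_Icc)

end helpers

section cell
variable {E : Type*} [NormedAddCommGroup E] [NormedSpace ℝ E] [CompleteSpace E]
variable {h : (Fin 2 → ℝ) → E}

lemma vadd2 (a b : ℝ) (c d : ℤ) : (![a, b] + fun i => ((![c, d] : Fin 2 → ℤ) i : ℝ)) = ![a + c, b + d] := by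
  ext i; fin_cases i <;> simp

lemma per_snd (hper : ∀ (x : Fin 2 → ℝ) (k : Fin 2 → ℤ), h (x + fun i => (k i : ℝ)) = h x)
    (a : ℝ) : Function.Periodic (fun z => h ![a, z]) 1 := by
  intro z
  have := hper ![a, z] ![0, 1]
  rw [vadd2] at this
  simpa using this

lemma cont_snd (hc : Continuous h) (a : ℝ) : Continuous fun z : ℝ => h ![a, z] := by
  have : Continuous fun z : ℝ => (![a, z] : Fin 2 → ℝ) :=
    cont_pair.comp (continuous_const.prodMk continuous_id)
  exact hc.comp this

lemma Gcont (hc : Continuous h) :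
    Continuous fun w : ℝ => ∫ y in (0:ℝ)..1, h ![w, y] := by
  have huc : Continuous (Function.uncurry fun w y : ℝ => h ![w, y]) := by
    have : Continuous fun p : ℝ × ℝ => h ![p.1, p.2] := hc.comp cont_pair
    exact this
  exact intervalIntegral.continuous_parametric_intervalIntegral_of_continuous' huc 0 1

lemma Gper (hper : ∀ (x : Fin 2 → ℝ) (k : Fin 2 → ℤ), h (x + fun i => (k i : ℝ)) = h x) :
    Function.Periodic (fun w : ℝ => ∫ y in (0:ℝ)..1, h ![w, y]) 1 := by
  intro w
  simp only
  apply intervalIntegral.integral_congr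
  intro y _
  have := hper ![w, y] ![1, 0]
  rw [vadd2] at this
  simpa using this

/-- Scaling invariance of the cell integral of a periodic function. -/
lemma cell_scale (hc : Continuous h)
    (hper : ∀ (x : Fin 2 → ℝ) (k : Fin 2 → ℤ), h (x + fun i => (k i : ℝ)) = h x)
    (N : ℕ) (hN : 0 < N) :
    ∫ x in Set.Icc (0 : Fin 2 → ℝ) 1, h ((N:ℝ) • x) = ∫ x in Set.Icc (0 : Fin 2 → ℝ) 1, h x := by
  have hsc : Continuous fun x : Fin 2 → ℝ => h ((N:ℝ) • x) :=
    hc.comp (continuous_const_smul _)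
  rw [fubini2 _ hsc, fubini2 _ hc]
  have smul_pair : ∀ a b : ℝ, (N:ℝ) • (![a, b] : Fin 2 → ℝ) = ![(N:ℝ) * a, (N:ℝ) * b] := by
    intro a b; ext i; fin_cases i <;> simp
  calc ∫ x in (0:ℝ)..1, ∫ y in (0:ℝ)..1, h ((N:ℝ) • ![x, y])
      = ∫ x in (0:ℝ)..1, ∫ y in (0:ℝ)..1, h ![(N:ℝ) * x, y] := by
        apply intervalIntegral.integral_congr
        intro x _
        simp only [smul_pair]
        exact int1_scale (fun z => h ![(N:ℝ) * x, z]) (cont_snd hc _) (per_snd hper _) N hN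
    _ = ∫ x in (0:ℝ)..1, ∫ y in (0:ℝ)..1, h ![x, y] :=
        int1_scale (fun w => ∫ y in (0:ℝ)..1, h ![w, y]) (Gcont hc) (Gper hper) N hN

/-- Translation invariance of the cell integral of a periodic function. -/
lemma cell_shift (hc : Continuous h)
    (hper : ∀ (x : Fin 2 → ℝ) (k : Fin 2 → ℤ), h (x + fun i => (k i : ℝ)) = h x)
    (v : Fin 2 → ℝ) :
    ∫ x in Set.Icc (0 : Fin 2 → ℝ) 1, h (x + v) = ∫ x in Set.Icc (0 : Fin 2 → ℝ) 1, h x := by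
  have hsc : Continuous fun x : Fin 2 → ℝ => h (x + v) :=
    hc.comp (continuous_id.add continuous_const)
  rw [fubini2 _ hsc, fubini2 _ hc]
  have add_pair : ∀ a b : ℝ, (![a, b] : Fin 2 → ℝ) + v = ![a + v 0, b + v 1] := by
    intro a b; ext i; fin_cases i <;> simp
  calc ∫ x in (0:ℝ)..1, ∫ y in (0:ℝ)..1, h (![x, y] + v)
      = ∫ x in (0:ℝ)..1, ∫ y in (0:ℝ)..1, h ![x + v 0, y] := by
        apply intervalIntegral.integral_congr
        intro x _
        simp only [add_pair]
        exact int1_shift (fun z => h ![x + v 0, z]) (per_snd hper _) (v 1)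
    _ = ∫ x in (0:ℝ)..1, ∫ y in (0:ℝ)..1, h ![x, y] :=
        int1_shift (fun w => ∫ y in (0:ℝ)..1, h ![w, y]) (Gper hper) (v 0)

end cell

/-- Fourier coefficient of a `ℤ²`-periodic function `ℝ² → ℝ`, computed on the cell `[0,1]²`. -/
noncomputable def fourierCoeff2 (f : (Fin 2 → ℝ) → ℝ) (k : Fin 2 → ℤ) : ℂ :=
  ∫ x in Set.Icc (0 : Fin 2 → ℝ) 1,
    (f x : ℂ) * Complex.exp (-(2 * (Real.pi : ℂ) * Complex.I) * ((∑ i, (k i : ℝ) * x i : ℝ) : ℂ))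

/-- The square of the homogeneous `Ḣ^{-1}` seminorm (functional mixing scale):
`∑_{k ≠ 0} (2π|k|)⁻² |f̂_k|²`, valued in `[0,∞]`. -/
noncomputable def negSobolevSq (f : (Fin 2 → ℝ) → ℝ) : ENNReal :=
  ∑' k : {k : Fin 2 → ℤ // k ≠ 0},
    ENNReal.ofReal (((2 * Real.pi) ^ 2 * ∑ i, ((k.1 i : ℝ)) ^ 2)⁻¹ * ‖fourierCoeff2 f k.1‖ ^ 2)

lemma exp_int_fact (n : ℤ) :
    Complex.exp (-(2 * (Real.pi : ℂ) * Complex.I) * (n : ℂ)) = 1 := by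
  have : -(2 * (Real.pi : ℂ) * Complex.I) * (n : ℂ) = (-n : ℤ) * (2 * Real.pi * Complex.I) := by
    push_cast; ring
  rw [this, Complex.exp_int_mul_two_pi_mul_I]

lemma fourier_scale (f : (Fin 2 → ℝ) → ℝ) (hc : Continuous f)
    (hper : ∀ (x : Fin 2 → ℝ) (k : Fin 2 → ℤ), f (x + fun i => (k i : ℝ)) = f x)
    (N : ℕ) (hN : 0 < N) (k : Fin 2 → ℤ) :
    fourierCoeff2 (fun x => f ((N:ℝ) • x)) k =
      if ∀ i, (N:ℤ) ∣ k i then fourierCoeff2 f (fun i => k i / N) else 0 := by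
  have hN0 : (N:ℝ) ≠ 0 := Nat.cast_ne_zero.mpr hN.ne'
  by_cases hdvd : ∀ i, (N:ℤ) ∣ k i
  · rw [if_pos hdvd]
    set j : Fin 2 → ℤ := fun i => k i / N with hj
    have hkj : ∀ i, k i = N * j i := fun i => (Int.mul_ediv_cancel' (hdvd i)).symm
    set H : (Fin 2 → ℝ) → ℂ := fun y =>
      (f y : ℂ) * Complex.exp (-(2 * (Real.pi : ℂ) * Complex.I) *
        ((∑ i, (j i : ℝ) * y i : ℝ) : ℂ)) with hH
    have hHc : Continuous H := by
      apply (Complex.continuous_ofReal.comp hc).mul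
      apply Complex.continuous_exp.comp
      apply Continuous.mul continuous_const
      exact Complex.continuous_ofReal.comp
        (continuous_finset_sum _ fun i _ => continuous_const.mul (continuous_apply i))
    have hHper : ∀ (x : Fin 2 → ℝ) (e : Fin 2 → ℤ), H (x + fun i => (e i : ℝ)) = H x := by
      intro x e
      simp only [hH]
      rw [hper x e]
      congr 1
      have hsum : (∑ i, (j i : ℝ) * (x + fun i' => (e i' : ℝ)) i)
          = (∑ i, (j i : ℝ) * x i) + ((∑ i, j i * e i : ℤ) : ℝ) := by
        push_cast
        rw [← Finset.sum_add_distrib]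
        congr 1; ext i; simp [Pi.add_apply]; ring
      rw [hsum]
      push_cast
      rw [mul_add, Complex.exp_add]
      have := exp_int_fact (∑ i, j i * e i)
      push_cast at this
      rw [this, mul_one]
    have hint : ∀ x : Fin 2 → ℝ,
        ((f ((N:ℝ) • x) : ℝ) : ℂ) * Complex.exp (-(2 * (Real.pi : ℂ) * Complex.I) *
          ((∑ i, (k i : ℝ) * x i : ℝ) : ℂ)) = H ((N:ℝ) • x) := by
      intro x
      simp only [hH]
      congr 2
      have : ∀ i, (j i : ℝ) * ((N:ℝ) • x) i = (k i : ℝ) * x i := by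
        intro i
        rw [hkj i]
        simp [Pi.smul_apply, smul_eq_mul]
        push_cast; ring
      rw [Finset.sum_congr rfl fun i _ => this i]
    unfold fourierCoeff2
    simp only [hint]
    exact cell_scale hHc hHper N hN
  · rw [if_neg hdvd]
    push_neg at hdvd
    obtain ⟨i₀, hi₀⟩ := hdvd
    set G : (Fin 2 → ℝ) → ℂ := fun x =>
      (f ((N:ℝ) • x) : ℂ) * Complex.exp (-(2 * (Real.pi : ℂ) * Complex.I) *
        ((∑ i, (k i : ℝ) * x i : ℝ) : ℂ)) with hG
    have hGc : Continuous G := by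
      apply (Complex.continuous_ofReal.comp (hc.comp (continuous_const_smul _))).mul
      apply Complex.continuous_exp.comp
      apply Continuous.mul continuous_const
      exact Complex.continuous_ofReal.comp
        (continuous_finset_sum _ fun i _ => continuous_const.mul (continuous_apply i))
    have hGper : ∀ (x : Fin 2 → ℝ) (e : Fin 2 → ℤ), G (x + fun i => (e i : ℝ)) = G x := by
      intro x e
      simp only [hG]
      have harg : (N:ℝ) • (x + fun i => (e i : ℝ))
          = ((N:ℝ) • x) + fun i => (((N : ℤ) * e i : ℤ) : ℝ) := by
        ext i; simp [Pi.smul_apply, Pi.add_apply, smul_eq_mul]; push_cast; ring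
      rw [harg, hper ((N:ℝ) • x) (fun i => (N : ℤ) * e i)]
      congr 1
      have hsum : (∑ i, (k i : ℝ) * (x + fun i' => (e i' : ℝ)) i)
          = (∑ i, (k i : ℝ) * x i) + ((∑ i, k i * e i : ℤ) : ℝ) := by
        push_cast
        rw [← Finset.sum_add_distrib]
        congr 1; ext i; simp [Pi.add_apply]; ring
      rw [hsum]
      push_cast
      rw [mul_add, Complex.exp_add]
      have := exp_int_fact (∑ i, k i * e i)
      push_cast at this
      rw [this, mul_one]
    set v : Fin 2 → ℝ := fun i' => if i' = i₀ then (N:ℝ)⁻¹ else 0 with hv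
    have hshift := cell_shift hGc hGper v
    set c : ℂ := Complex.exp (-(2 * (Real.pi : ℂ) * Complex.I) *
      ((k i₀ : ℝ) * (N:ℝ)⁻¹ : ℝ)) with hcdef
    have hGv : ∀ x, G (x + v) = c * G x := by
      intro x
      simp only [hG]
      have harg : (N:ℝ) • (x + v) = ((N:ℝ) • x) + fun i =>
          (((Pi.single i₀ 1 : Fin 2 → ℤ) i : ℤ) : ℝ) := by
        ext i
        simp only [Pi.smul_apply, Pi.add_apply, smul_eq_mul, hv]
        by_cases hi : i = i₀ <;> simp [hi, Pi.single_apply] <;> field_simp <;> ring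
      rw [harg, hper ((N:ℝ) • x) (Pi.single i₀ 1)]
      have hsum : (∑ i, (k i : ℝ) * (x + v) i)
          = (∑ i, (k i : ℝ) * x i) + (k i₀ : ℝ) * (N:ℝ)⁻¹ := by
        simp only [Pi.add_apply, hv]
        rw [show (∑ i, (k i : ℝ) * (x i + if i = i₀ then (N:ℝ)⁻¹ else 0))
          = ∑ i, ((k i : ℝ) * x i + if i = i₀ then (k i : ℝ) * (N:ℝ)⁻¹ else 0) from
          Finset.sum_congr rfl fun i _ => by by_cases hi : i = i₀ <;> simp [hi] <;> ring]
        rw [Finset.sum_add_distrib, Finset.sum_ite_eq' Finset.univ i₀]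
        simp
      rw [hsum]
      push_cast
      rw [mul_add, Complex.exp_add, hcdef]
      push_cast
      ring
    have hcne : c ≠ 1 := by
      intro hc1
      obtain ⟨n, hn⟩ := Complex.exp_eq_one_iff.mp (hcdef ▸ hc1)
      have h2πI : (2 * (Real.pi : ℂ) * Complex.I) ≠ 0 := by
        simp [Real.pi_ne_zero, Complex.I_ne_zero]
      have hw : (((k i₀ : ℝ) * (N:ℝ)⁻¹ : ℝ) : ℂ) = ((-n : ℤ) : ℂ) := by
        apply mul_left_cancel₀ h2πI
        push_cast at hn ⊢
        linear_combination -hn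
      have hwr : ((k i₀ : ℝ) * (N:ℝ)⁻¹ : ℝ) = ((-n : ℤ) : ℝ) := by
        exact_mod_cast hw
      have hki : k i₀ = (N : ℤ) * (-n) := by
        have h' : (k i₀ : ℝ) = (((N : ℤ) * (-n) : ℤ) : ℝ) := by
          field_simp at hwr
          push_cast at hwr ⊢
          linarith
        exact_mod_cast h'
      exact hi₀ ⟨-n, hki⟩
    have hI : (∫ x in Set.Icc (0 : Fin 2 → ℝ) 1, G x)
        = c * ∫ x in Set.Icc (0 : Fin 2 → ℝ) 1, G x := by
      conv_lhs => rw [← hshift]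
      simp only [hGv]
      exact MeasureTheory.integral_const_mul c G
    have hzero : (∫ x in Set.Icc (0 : Fin 2 → ℝ) 1, G x) = 0 := by
      have h1c : (1 - c) * (∫ x in Set.Icc (0 : Fin 2 → ℝ) 1, G x) = 0 := by
        linear_combination hI
      rcases mul_eq_zero.mp h1c with h | h
      · exact absurd (by linear_combination -h : c = 1) hcne
      · exact h
    unfold fourierCoeff2
    exact hzero



lemma negSobolev_scale (f : (Fin 2 → ℝ) → ℝ) (hc : Continuous f)
    (hper : ∀ (x : Fin 2 → ℝ) (k : Fin 2 → ℤ), f (x + fun i => (k i : ℝ)) = f x)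
    (N : ℕ) (hN : 0 < N) :
    negSobolevSq (fun x => f ((N:ℝ) • x))
      = ENNReal.ofReal (((N:ℝ)^2)⁻¹) * negSobolevSq f := by
  have hNZ : (N:ℤ) ≠ 0 := by exact_mod_cast hN.ne'
  set g : {k : Fin 2 → ℤ // k ≠ 0} → ENNReal := fun k =>
    ENNReal.ofReal (((2 * Real.pi) ^ 2 * ∑ i, ((k.1 i : ℝ)) ^ 2)⁻¹
      * ‖fourierCoeff2 (fun x => f ((N:ℝ) • x)) k.1‖ ^ 2) with hg
  have hι : ∀ j : {j : Fin 2 → ℤ // j ≠ 0}, (fun i => (N:ℤ) * j.1 i) ≠ 0 := by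
    intro j hcontra
    apply j.2
    funext i
    have := congrFun hcontra i
    simp only [Pi.zero_apply] at this ⊢
    exact (mul_eq_zero.mp this).resolve_left hNZ
  set ι : {j : Fin 2 → ℤ // j ≠ 0} → {k : Fin 2 → ℤ // k ≠ 0} :=
    fun j => ⟨fun i => (N:ℤ) * j.1 i, hι j⟩ with hιdef
  have hinj : Function.Injective ι := by
    intro a b hab
    apply Subtype.ext
    funext i
    have := congrFun (congrArg Subtype.val hab) i
    exact mul_left_cancel₀ hNZ this
  have hsupp : Function.support g ⊆ Set.range ι := by
    intro k hk
    by_cases hd : ∀ i, (N:ℤ) ∣ k.1 i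
    · have hj0 : (fun i => k.1 i / (N:ℤ)) ≠ 0 := by
        intro hcontra
        apply k.2
        funext i
        have h1 := congrFun hcontra i
        simp only [Pi.zero_apply] at h1 ⊢
        have := Int.mul_ediv_cancel' (hd i)
        rw [h1, mul_zero] at this
        exact this.symm
      refine ⟨⟨fun i => k.1 i / (N:ℤ), hj0⟩, ?_⟩
      apply Subtype.ext
      funext i
      exact Int.mul_ediv_cancel' (hd i)
    · exfalso
      apply hk
      simp only [hg, fourier_scale f hc hper N hN k.1, if_neg hd]
      simp
  have key : negSobolevSq (fun x => f ((N:ℝ) • x)) = ∑' j, g (ι j) :=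
    (hinj.tsum_eq hsupp).symm
  rw [key]
  have hterm : ∀ j : {j : Fin 2 → ℤ // j ≠ 0}, g (ι j)
      = ENNReal.ofReal (((N:ℝ)^2)⁻¹) *
        ENNReal.ofReal (((2 * Real.pi) ^ 2 * ∑ i, ((j.1 i : ℝ)) ^ 2)⁻¹
          * ‖fourierCoeff2 f j.1‖ ^ 2) := by
    intro j
    have hdvd : ∀ i, (N:ℤ) ∣ (N:ℤ) * j.1 i := fun i => dvd_mul_right _ _
    have hcoeff : fourierCoeff2 (fun x => f ((N:ℝ) • x)) (fun i => (N:ℤ) * j.1 i)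
        = fourierCoeff2 f j.1 := by
      rw [fourier_scale f hc hper N hN, if_pos hdvd]
      congr 1
      funext i
      exact Int.mul_ediv_cancel_left _ hNZ
    have hsum : (∑ i, (((N:ℤ) * j.1 i : ℤ) : ℝ) ^ 2)
        = (N:ℝ)^2 * ∑ i, ((j.1 i : ℝ)) ^ 2 := by
      push_cast
      rw [Finset.mul_sum]
      congr 1
      funext i
      ring
    simp only [hg, hιdef, hcoeff, hsum]
    rw [show (2 * Real.pi) ^ 2 * ((N:ℝ)^2 * ∑ i, ((j.1 i : ℝ)) ^ 2)
        = (N:ℝ)^2 * ((2 * Real.pi) ^ 2 * ∑ i, ((j.1 i : ℝ)) ^ 2) by ring]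
    rw [mul_inv, mul_assoc]
    rw [ENNReal.ofReal_mul (by positivity)]
  calc ∑' j, g (ι j)
      = ∑' j : {j : Fin 2 → ℤ // j ≠ 0}, ENNReal.ofReal (((N:ℝ)^2)⁻¹) *
        ENNReal.ofReal (((2 * Real.pi) ^ 2 * ∑ i, ((j.1 i : ℝ)) ^ 2)⁻¹
          * ‖fourierCoeff2 f j.1‖ ^ 2) := by
        exact tsum_congr hterm
    _ = ENNReal.ofReal (((N:ℝ)^2)⁻¹) * negSobolevSq f := by
        rw [ENNReal.tsum_mul_left]
        rfl


lemma fderiv_comp_const_smul (g : (Fin 2 → ℝ) → ℝ) (hg : Differentiable ℝ g) (c : ℝ)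
    (x v : Fin 2 → ℝ) :
    fderiv ℝ (fun y => g (c • y)) x v = c * fderiv ℝ g (c • x) v := by
  have hA : HasFDerivAt (fun y : Fin 2 → ℝ => c • y)
      (c • ContinuousLinearMap.id ℝ (Fin 2 → ℝ)) x := by
    have h := (c • ContinuousLinearMap.id ℝ (Fin 2 → ℝ)).hasFDerivAt (x := x)
    simpa using h
  have hcomp := (hg (c • x)).hasFDerivAt.comp x hA
  rw [show (fun y : Fin 2 → ℝ => g (c • y)) = g ∘ (HSMul.hSMul c) from rfl, hcomp.fderiv]
  simp

/-- The self-similar construction, case `s = 0`, `p = 2`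
(energy-constrained flow): patching the rescaled blocks
`u(t,x) = u₀((t-T_n)/λⁿ, mⁿ x)`, `ρ(t,x) = ρ₀((t-T_n)/λⁿ, mⁿ x)` on `[T_n, T_{n+1})`,
`T_n = ∑_{i<n} λ^i`, gives a solution whose velocity stays bounded in `L²([0,1]²)` by `K`,
and whose functional mixing scale satisfies `‖ρ(t,·)‖_{Ḣ^{-1}} ≤ M λⁿ` on `[T_n, T_{n+1})`;
in particular it tends to `0` as `t → T_∞ = 1/(1-λ)`: perfect mixing in finite time. -/
theorem stmt6 (m : ℕ) (hm : 2 ≤ m) (lam : ℝ) (hlam : lam = (m : ℝ)⁻¹)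
    (K M : ℝ) (hK : 0 ≤ K) (hM : 0 ≤ M)
    (u₀ : ℝ × (Fin 2 → ℝ) → Fin 2 → ℝ) (ρ₀ : ℝ × (Fin 2 → ℝ) → ℝ)
    (hu₀ : ContDiff ℝ (⊤ : ℕ∞) u₀) (hρ₀ : ContDiff ℝ (⊤ : ℕ∞) ρ₀)
    (hu₀per : ∀ (t : ℝ) (x : Fin 2 → ℝ) (k : Fin 2 → ℤ), u₀ (t, x + fun i => (k i : ℝ)) = u₀ (t, x))
    (hρ₀per : ∀ (t : ℝ) (x : Fin 2 → ℝ) (k : Fin 2 → ℤ), ρ₀ (t, x + fun i => (k i : ℝ)) = ρ₀ (t, x))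
    (hdiv₀ : ∀ (t : ℝ), t ∈ Set.Icc (0:ℝ) 1 → ∀ x,
      ∑ i, fderiv ℝ (fun y => u₀ (t, y) i) x (Pi.single i 1) = 0)
    (hce₀ : ∀ (t : ℝ), t ∈ Set.Icc (0:ℝ) 1 → ∀ x,
      deriv (fun s => ρ₀ (s, x)) t
        + ∑ i, fderiv ℝ (fun y => u₀ (t, y) i * ρ₀ (t, y)) x (Pi.single i 1) = 0)
    -- (i) self-similarity at time 1
    (hself : ∀ x, ρ₀ (1, x) = ρ₀ (0, (m : ℝ) • x))
    -- (ii) zero mean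
    (hmean : ∫ x in Set.Icc (0 : Fin 2 → ℝ) 1, ρ₀ (0, x) = 0)
    -- (iii) L² bound on the building block
    (hL2 : ∀ t ∈ Set.Icc (0:ℝ) 1,
      Real.sqrt (∫ x in Set.Icc (0 : Fin 2 → ℝ) 1, ∑ i, (u₀ (t, x) i) ^ 2) ≤ K)
    -- (iv) Ḣ^{-1} bound on the building block
    (hHm1 : ∀ t ∈ Set.Icc (0:ℝ) 1,
      negSobolevSq (fun x => ρ₀ (t, x)) ≤ ENNReal.ofReal (M ^ 2))
    (T : ℕ → ℝ) (hT : ∀ n, T n = ∑ i ∈ Finset.range n, lam ^ i)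
    (Tinf : ℝ) (hTinf : Tinf = 1 / (1 - lam))
    (u : ℝ × (Fin 2 → ℝ) → Fin 2 → ℝ) (ρ : ℝ × (Fin 2 → ℝ) → ℝ)
    (hu : ∀ (n : ℕ) (t : ℝ), T n ≤ t → t < T (n + 1) → ∀ x,
      u (t, x) = u₀ ((t - T n) / lam ^ n, ((m : ℝ) ^ n) • x))
    (hρ : ∀ (n : ℕ) (t : ℝ), T n ≤ t → t < T (n + 1) → ∀ x,
      ρ (t, x) = ρ₀ ((t - T n) / lam ^ n, ((m : ℝ) ^ n) • x)) :
    -- (a) continuity and initial datum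
    (ContinuousOn ρ (Set.Ico (0:ℝ) Tinf ×ˢ Set.univ) ∧ ∀ x, ρ (0, x) = ρ₀ (0, x)) ∧
    -- (b) smoothness, incompressibility and continuity equation on each stage
    (∀ n : ℕ,
      ContDiffOn ℝ (⊤ : ℕ∞) u (Set.Ioo (T n) (T (n + 1)) ×ˢ Set.univ) ∧
      ContDiffOn ℝ (⊤ : ℕ∞) ρ (Set.Ioo (T n) (T (n + 1)) ×ˢ Set.univ) ∧
      ∀ t ∈ Set.Ioo (T n) (T (n + 1)), ∀ x,
        (∑ i, fderiv ℝ (fun y => u (t, y) i) x (Pi.single i 1) = 0) ∧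
        deriv (fun s => ρ (s, x)) t
          + ∑ i, fderiv ℝ (fun y => u (t, y) i * ρ (t, y)) x (Pi.single i 1) = 0) ∧
    -- (c) uniform L² bound for the velocity
    (∀ t : ℝ, 0 ≤ t → t < Tinf →
      Real.sqrt (∫ x in Set.Icc (0 : Fin 2 → ℝ) 1, ∑ i, (u (t, x) i) ^ 2) ≤ K) ∧
    -- (d) stagewise decay of the functional mixing scale and perfect mixing in finite time
    ((∀ (n : ℕ) (t : ℝ), T n ≤ t → t < T (n + 1) →
        (negSobolevSq (fun x => ρ (t, x))) ^ (1/2 : ℝ) ≤ ENNReal.ofReal (M * lam ^ n)) ∧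
      Filter.Tendsto (fun t => (negSobolevSq (fun x => ρ (t, x))) ^ (1/2 : ℝ))
        (nhdsWithin Tinf (Set.Iio Tinf)) (nhds 0)) := by
  have hm2 : (2:ℝ) ≤ (m:ℝ) := by exact_mod_cast hm
  have hm1 : (1:ℝ) < (m:ℝ) := by linarith
  have hmpos : (0:ℝ) < (m:ℝ) := by linarith
  have hl0 : 0 < lam := by rw [hlam]; positivity
  have hl1 : lam < 1 := by
    rw [hlam]
    exact inv_lt_one_of_one_lt₀ hm1
  have h1l : 0 < 1 - lam := by linarith
  have hlnpos : ∀ n : ℕ, (0:ℝ) < lam ^ n := fun n => pow_pos hl0 n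
  have hcpos : ∀ n : ℕ, (0:ℝ) < (m:ℝ)^n := fun n => pow_pos hmpos n
  have hlaminv : ∀ n : ℕ, lam ^ n = ((m:ℝ)^n)⁻¹ := fun n => by rw [hlam, inv_pow]
  have hTsucc : ∀ n, T (n+1) = T n + lam ^ n := fun n => by
    rw [hT, hT, Finset.sum_range_succ]
  have hTmono : StrictMono T := strictMono_nat_of_lt_succ fun n => by
    rw [hTsucc]; linarith [hlnpos n]
  have hT0 : T 0 = 0 := by rw [hT]; simp
  have hTnn : ∀ n, 0 ≤ T n := fun n => hT0 ▸ hTmono.monotone (Nat.zero_le n)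
  have hTform : ∀ n, T n = (1 - lam ^ n) / (1 - lam) := by
    intro n
    rw [hT, geom_sum_eq (ne_of_lt hl1),
      show lam ^ n - 1 = -(1 - lam ^ n) by ring, show lam - 1 = -(1 - lam) by ring,
      neg_div_neg_eq]
  have hTltinf : ∀ n, T n < Tinf := by
    intro n
    rw [hTform, hTinf]
    exact (div_lt_div_iff_of_pos_right h1l).mpr (by linarith [hlnpos n])
  have hstage : ∀ t : ℝ, 0 ≤ t → t < Tinf → ∃ n, T n ≤ t ∧ t < T (n+1) := by
    intro t ht0 htinf
    have hex : ∃ n, t < T n := by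
      obtain ⟨n, hn⟩ := exists_pow_lt_of_lt_one
        (show (0:ℝ) < (Tinf - t) * (1 - lam) by nlinarith) hl1
      refine ⟨n, ?_⟩
      rw [hTform, lt_div_iff₀ h1l]
      rw [hTinf] at hn
      have h2 : (1/(1-lam)) * (1-lam) = 1 := by field_simp
      nlinarith [hn]
    have hn₀pos : Nat.find hex ≠ 0 := by
      intro h
      have := Nat.find_spec hex
      rw [h, hT0] at this
      linarith
    obtain ⟨n, hn⟩ := Nat.exists_eq_succ_of_ne_zero hn₀pos
    refine ⟨n, ?_, ?_⟩
    · by_contra h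
      push_neg at h
      exact Nat.find_min hex (by omega) h
    · have := Nat.find_spec hex
      rwa [hn] at this
  have hs01 : ∀ (n : ℕ) (t : ℝ), T n ≤ t → t < T (n+1) →
      (t - T n)/lam^n ∈ Set.Ico (0:ℝ) 1 := by
    intro n t h1 h2
    constructor
    · exact div_nonneg (by linarith) (hlnpos n).le
    · rw [div_lt_one (hlnpos n)]
      have := hTsucc n
      linarith
  have hkey : ∀ (n : ℕ) (t : ℝ), T n ≤ t → t ≤ T (n+1) → ∀ x,
      ρ (t, x) = ρ₀ ((t - T n)/lam^n, ((m:ℝ)^n) • x) := by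
    intro n t h1 h2 x
    rcases lt_or_eq_of_le h2 with h2' | h2'
    · exact hρ n t h1 h2' x
    · subst h2'
      rw [hρ (n+1) (T (n+1)) le_rfl (hTmono (lt_add_one (n+1))) x]
      rw [sub_self, zero_div]
      have harg : (T (n+1) - T n)/lam^n = 1 := by
        rw [hTsucc n]
        field_simp
        ring
      rw [harg, hself (((m:ℝ)^n) • x), smul_smul, ← pow_succ']
  have hNcast : ∀ n : ℕ, ((m^n : ℕ) : ℝ) = (m:ℝ)^n := fun n => by push_cast; ring
  have hNpos : ∀ n : ℕ, 0 < m^n := fun n => pow_pos (by omega) n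
  have hcontρs : ∀ s : ℝ, Continuous (fun y : Fin 2 → ℝ => ρ₀ (s, y)) :=
    fun s => hρ₀.continuous.comp (Continuous.prodMk_right s)
  have hcontu : ∀ (s : ℝ) (i : Fin 2), Continuous (fun y : Fin 2 → ℝ => u₀ (s, y) i) :=
    fun s i => (continuous_apply i).comp (hu₀.continuous.comp (Continuous.prodMk_right s))
  -- (d1) stagewise decay
  have hd1 : ∀ (n : ℕ) (t : ℝ), T n ≤ t → t < T (n + 1) →
      (negSobolevSq (fun x => ρ (t, x))) ^ (1/2 : ℝ) ≤ ENNReal.ofReal (M * lam ^ n) := by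
    intro n t hn1 hn2
    set s := (t - T n)/lam^n with hsdef
    have hsmem := hs01 n t hn1 hn2
    have hfeq : (fun x => ρ (t, x)) = fun x => (fun y => ρ₀ (s, y)) (((m^n : ℕ) : ℝ) • x) := by
      funext x
      rw [hρ n t hn1 hn2 x, hNcast n]
    rw [hfeq, negSobolev_scale _ (hcontρs s) (fun x k => hρ₀per s x k) (m^n) (hNpos n)]
    have hb1 : ENNReal.ofReal ((((m^n:ℕ):ℝ))^2)⁻¹ * negSobolevSq (fun y => ρ₀ (s,y))
        ≤ ENNReal.ofReal ((((m^n:ℕ):ℝ))^2)⁻¹ * ENNReal.ofReal (M^2) :=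
      mul_le_mul_right (hHm1 s ⟨hsmem.1, hsmem.2.le⟩) _
    have hb2 : ENNReal.ofReal ((((m^n:ℕ):ℝ))^2)⁻¹ * ENNReal.ofReal (M^2)
        = ENNReal.ofReal ((M * lam^n)^2) := by
      rw [← ENNReal.ofReal_mul (by positivity)]
      congr 1
      rw [hNcast n, hlaminv n]
      field_simp
    have hb3 := le_trans hb1 (le_of_eq hb2)
    calc (ENNReal.ofReal ((((m^n:ℕ):ℝ))^2)⁻¹ * negSobolevSq (fun y => ρ₀ (s,y))) ^ (1/2:ℝ)
        ≤ (ENNReal.ofReal ((M * lam^n)^2)) ^ (1/2:ℝ) :=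
          ENNReal.rpow_le_rpow hb3 (by norm_num)
      _ = ENNReal.ofReal (M * lam^n) := by
          rw [ENNReal.ofReal_pow (mul_nonneg hM (hlnpos n).le), ← ENNReal.rpow_natCast,
            ← ENNReal.rpow_mul]
          norm_num
  refine ⟨⟨?_, ?_⟩, ?_, ?_, hd1, ?_⟩
  · -- (a1) continuity
    set F : ℕ → ℝ × (Fin 2 → ℝ) → ℝ :=
      fun n p => ρ₀ ((p.1 - T n)/lam^n, ((m:ℝ)^n) • p.2) with hFdef
    have hFc : ∀ n, Continuous (F n) := by
      intro n
      apply hρ₀.continuous.comp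
      exact ((continuous_fst.sub continuous_const).div_const _).prodMk
        (by fun_prop : Continuous fun p : ℝ × (Fin 2 → ℝ) => ((m:ℝ)^n) • p.2)
    have hkeyF : ∀ (n : ℕ) (p : ℝ × (Fin 2 → ℝ)), T n ≤ p.1 → p.1 ≤ T (n+1) →
        ρ p = F n p := fun n p h1 h2 => hkey n p.1 h1 h2 p.2
    intro p hp
    obtain ⟨hp1, -⟩ := hp
    obtain ⟨hp0, hpinf⟩ := hp1
    obtain ⟨n, hn1, hn2⟩ := hstage p.1 hp0 hpinf
    rcases lt_or_eq_of_le hn1 with hlt | heq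
    · -- interior of a stage
      apply ContinuousAt.continuousWithinAt
      apply ((hFc n).continuousAt).congr
      have hopen : {q : ℝ × (Fin 2 → ℝ) | T n < q.1 ∧ q.1 < T (n+1)} ∈ nhds p := by
        apply IsOpen.mem_nhds
        · exact (isOpen_lt continuous_const continuous_fst).inter
            (isOpen_lt continuous_fst continuous_const)
        · exact ⟨hlt, hn2⟩
      filter_upwards [hopen] with q hq
      exact (hkeyF n q hq.1.le hq.2.le).symm
    · rcases Nat.eq_zero_or_pos n with hn0 | hnpos
      · -- start time t = 0
        subst hn0
        apply ContinuousWithinAt.congr_of_eventuallyEq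
          ((hFc 0).continuousAt.continuousWithinAt)
        · have hopen : {q : ℝ × (Fin 2 → ℝ) | q.1 < T 1} ∈ nhds p := by
            apply IsOpen.mem_nhds (isOpen_lt continuous_fst continuous_const)
            show p.1 < T 1
            rw [← heq]
            exact hTmono (show 0 < 1 by norm_num)
          filter_upwards [mem_nhdsWithin_of_mem_nhds hopen, self_mem_nhdsWithin] with q hq1 hq2
          have hq0 : T 0 ≤ q.1 := by
            rw [hT0]
            exact hq2.1.1
          exact hkeyF 0 q hq0 hq1.le
        · exact hkeyF 0 p hn1 (by rw [← heq]; exact (hTmono (show 0 < 1 by norm_num)).le)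
      · -- junction time t = T n, n ≥ 1
        obtain ⟨k, rfl⟩ : ∃ k, n = k + 1 := ⟨n - 1, by omega⟩
        set H : ℝ × (Fin 2 → ℝ) → ℝ :=
          fun q => if q.1 ≤ T (k+1) then F k q else F (k+1) q with hHdef
        have hHc : Continuous H := by
          apply Continuous.if_le (hFc k) (hFc (k+1)) continuous_fst continuous_const
          intro q hq
          have e1 : ρ q = F k q :=
            hkeyF k q (by rw [hq]; exact (hTmono (lt_add_one k)).le) (le_of_eq hq)
          have e2 : ρ q = F (k+1) q :=
            hkeyF (k+1) q (le_of_eq hq.symm)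
              (by rw [hq]; exact (hTmono (lt_add_one (k+1))).le)
          rw [← e1, e2]
        apply ContinuousAt.continuousWithinAt
        apply hHc.continuousAt.congr
        have hopen : {q : ℝ × (Fin 2 → ℝ) | T k < q.1 ∧ q.1 < T (k+2)} ∈ nhds p := by
          apply IsOpen.mem_nhds
          · exact (isOpen_lt continuous_const continuous_fst).inter
              (isOpen_lt continuous_fst continuous_const)
          · refine ⟨?_, ?_⟩
            · rw [← heq]; exact hTmono (lt_add_one k)
            · exact hn2
        filter_upwards [hopen] with q hq
        by_cases hqle : q.1 ≤ T (k+1)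
        · simp only [hHdef, if_pos hqle]
          exact (hkeyF k q hq.1.le hqle).symm
        · simp only [hHdef, if_neg hqle]
          push_neg at hqle
          exact (hkeyF (k+1) q hqle.le hq.2.le).symm
  · -- (a2) initial datum
    intro x
    have h01 : (0:ℝ) < T 1 := by
      have := hTmono (show 0 < 1 by norm_num)
      rwa [hT0] at this
    have h1 := hρ 0 0 hT0.le h01 x
    simpa [hT0] using h1
  · -- (b)
    have hcdu : ∀ (s : ℝ) (i : Fin 2), ContDiff ℝ (⊤ : ℕ∞) (fun y : Fin 2 → ℝ => u₀ (s, y) i) :=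
      fun s i => (contDiff_pi.mp (hu₀.comp (contDiff_const.prodMk contDiff_id))) i
    have hcdρs : ∀ s : ℝ, ContDiff ℝ (⊤ : ℕ∞) (fun y : Fin 2 → ℝ => ρ₀ (s, y)) :=
      fun s => hρ₀.comp (contDiff_const.prodMk contDiff_id)
    have hcdρt : ∀ w : Fin 2 → ℝ, ContDiff ℝ (⊤ : ℕ∞) (fun τ : ℝ => ρ₀ (τ, w)) :=
      fun w => hρ₀.comp (contDiff_id.prodMk contDiff_const)
    intro n
    refine ⟨?_, ?_, ?_⟩
    · have hU : ContDiff ℝ (⊤ : ℕ∞) (fun p : ℝ × (Fin 2 → ℝ) =>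
          u₀ ((p.1 - T n)/lam^n, ((m:ℝ)^n) • p.2)) :=
        hu₀.comp (((contDiff_fst.sub contDiff_const).div_const _).prodMk
          (contDiff_snd.const_smul _))
      apply hU.contDiffOn.congr
      rintro ⟨t, x⟩ ⟨ht, -⟩
      exact hu n t ht.1.le ht.2 x
    · have hR : ContDiff ℝ (⊤ : ℕ∞) (fun p : ℝ × (Fin 2 → ℝ) =>
          ρ₀ ((p.1 - T n)/lam^n, ((m:ℝ)^n) • p.2)) :=
        hρ₀.comp (((contDiff_fst.sub contDiff_const).div_const _).prodMk
          (contDiff_snd.const_smul _))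
      apply hR.contDiffOn.congr
      rintro ⟨t, x⟩ ⟨ht, -⟩
      exact hρ n t ht.1.le ht.2 x
    · intro t ht x
      have hsmem : (t - T n)/lam^n ∈ Set.Icc (0:ℝ) 1 := by
        have h := hs01 n t ht.1.le ht.2
        exact ⟨h.1, h.2.le⟩
      set c := (m:ℝ)^n with hcdef
      set s := (t - T n)/lam^n with hsdef
      have huy : ∀ y, u (t, y) = u₀ (s, c • y) := fun y => hu n t ht.1.le ht.2 y
      have hρy : ∀ y, ρ (t, y) = ρ₀ (s, c • y) := fun y => hρ n t ht.1.le ht.2 y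
      constructor
      · have hstep : ∀ i : Fin 2, fderiv ℝ (fun y => u (t,y) i) x (Pi.single i 1)
            = c * fderiv ℝ (fun z => u₀ (s,z) i) (c • x) (Pi.single i 1) := by
          intro i
          have hfun : (fun y => u (t,y) i) = fun y => (fun z => u₀ (s,z) i) (c • y) :=
            funext fun y => by rw [huy y]
          rw [hfun]
          exact fderiv_comp_const_smul _ ((hcdu s i).differentiable (by simp)) c x _
        rw [Finset.sum_congr rfl fun i _ => hstep i, ← Finset.mul_sum,
          hdiv₀ s hsmem (c • x), mul_zero]
      · have hev : (fun s' => ρ (s', x)) =ᶠ[nhds t]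
            (fun s' => ρ₀ ((s' - T n)/lam^n, c • x)) := by
          filter_upwards [Ioo_mem_nhds ht.1 ht.2] with s' hs'
          exact hρ n s' hs'.1.le hs'.2 x
        have hq : HasDerivAt (fun τ => ρ₀ (τ, c • x))
            (deriv (fun τ => ρ₀ (τ, c • x)) s) s :=
          (((hcdρt (c • x)).differentiable (by simp)) s).hasDerivAt
        have ha : HasDerivAt (fun s' : ℝ => (s' - T n)/lam^n) (1/lam^n) t := by
          have := ((hasDerivAt_id t).sub_const (T n)).div_const (lam^n)
          simpa [one_div] using this
        have hcomp := hq.comp t ha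
        have hderiv : deriv (fun s' => ρ (s', x)) t
            = deriv (fun τ => ρ₀ (τ, c • x)) s * (1/lam^n) := by
          rw [hev.deriv_eq]
          exact hcomp.deriv
        have hstep2 : ∀ i : Fin 2, fderiv ℝ (fun y => u (t,y) i * ρ (t,y)) x (Pi.single i 1)
            = c * fderiv ℝ (fun z => u₀ (s,z) i * ρ₀ (s,z)) (c • x) (Pi.single i 1) := by
          intro i
          have hfun : (fun y => u (t,y) i * ρ (t,y))
              = fun y => (fun z => u₀ (s,z) i * ρ₀ (s,z)) (c • y) :=
            funext fun y => by rw [huy y, hρy y]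
          rw [hfun]
          exact fderiv_comp_const_smul _
            (((hcdu s i).mul (hcdρs s)).differentiable (by simp)) c x _
        rw [hderiv, Finset.sum_congr rfl fun i _ => hstep2 i, ← Finset.mul_sum]
        have h0 := hce₀ s hsmem (c • x)
        have hclam : 1/lam^n = c := by rw [hlaminv n, one_div, inv_inv, hcdef]
        rw [hclam]
        linear_combination c * h0
  · -- (c) energy bound
    intro t ht0 htinf
    obtain ⟨n, hn1, hn2⟩ := hstage t ht0 htinf
    set s := (t - T n)/lam^n with hsdef
    have hsmem := hs01 n t hn1 hn2
    have heq : (∫ x in Set.Icc (0:Fin 2 → ℝ) 1, ∑ i, (u (t,x) i)^2)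
        = ∫ x in Set.Icc (0:Fin 2 → ℝ) 1, ∑ i, (u₀ (s,x) i)^2 := by
      have h1 : (fun x : Fin 2 → ℝ => ∑ i, (u (t,x) i)^2)
          = fun x => (fun y => ∑ i, (u₀ (s,y) i)^2) (((m^n : ℕ):ℝ) • x) := by
        funext x
        rw [hu n t hn1 hn2 x, hNcast n]
      rw [h1]
      exact cell_scale
        (continuous_finset_sum _ fun i _ => (hcontu s i).pow 2)
        (fun x k => by show (∑ i, (u₀ (s, x + fun i => ((k i : ℤ) : ℝ)) i)^2) = ∑ i, (u₀ (s, x) i)^2; rw [hu₀per s x k]) (m^n) (hNpos n)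
    rw [heq]
    exact hL2 s ⟨hsmem.1, hsmem.2.le⟩
  · -- (d2) tendsto
    rw [ENNReal.tendsto_nhds_zero]
    intro ε hε
    have hMl : Filter.Tendsto (fun nn : ℕ => ENNReal.ofReal (M * lam ^ nn))
        Filter.atTop (nhds 0) := by
      have hr : Filter.Tendsto (fun nn : ℕ => M * lam ^ nn) Filter.atTop (nhds 0) := by
        have := (tendsto_pow_atTop_nhds_zero_of_lt_one hl0.le hl1).const_mul M
        simpa using this
      have := (ENNReal.continuous_ofReal.tendsto 0).comp hr
      rwa [ENNReal.ofReal_zero] at this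
    obtain ⟨N, hN⟩ := (hMl.eventually_lt_const hε).exists
    filter_upwards [Ioo_mem_nhdsLT_of_mem
      (show Tinf ∈ Set.Ioc (T N) Tinf from ⟨hTltinf N, le_rfl⟩)] with t ht
    have ht0 : 0 ≤ t := le_of_lt (lt_of_le_of_lt (hTnn N) ht.1)
    obtain ⟨n, hn1, hn2⟩ := hstage t ht0 ht.2
    have hNn : N ≤ n := by
      by_contra h
      push_neg at h
      have : T (n+1) ≤ T N := hTmono.monotone (by omega)
      linarith [ht.1, hn2]
    calc (negSobolevSq fun x => ρ (t, x)) ^ (1/2:ℝ)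
        ≤ ENNReal.ofReal (M * lam ^ n) := hd1 n t hn1 hn2
      _ ≤ ENNReal.ofReal (M * lam ^ N) := ENNReal.ofReal_le_ofReal
          (mul_le_mul_of_nonneg_left (pow_le_pow_of_le_one hl0.le hl1.le hNn) hM)
      _ ≤ ε := hN.le
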